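/- Let A and C be natural numbers with A ≤ C + 2. Then the number of triples (a,b,c) of natural numbers satisfying a ≤ b, b ≤ A, c ≤ C, and a + C + 2 ≤ b + c equals (A+1)·A·(A−1)/6 (computed in ℤ, an exact division; the count is 0 when A ≤ 1). -/

import Mathlib

/-!
For fixed `a ≤ b ≤ A` the admissible `c` form the interval `[a + C + 2 - b, C]`, of length
`b - a - 1` because `b - a ≤ A ≤ C + 2`. Summing over `a < b` gives `b.choose 2`, and summing over
`b ≤ A` gives `(A + 1).choose 3` by the hockey-stick identity.
-/

open Finset

theorem sum_range_choose_eq_choose_succ (n k : ℕ) :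
    ∑ i ∈ range n, i.choose k = n.choose (k + 1) := by
  induction n with
  | zero => simp
  | succ n ih => rw [sum_range_succ, ih, Nat.choose_succ_succ', add_comm]

theorem sum_range_tsub_succ_eq_choose_two {b n : ℕ} (hbn : b ≤ n) :
    ∑ a ∈ range n, (b - (a + 1)) = b.choose 2 := by
  have vanish : ∀ a ∈ range n, a ∉ range b → b - (a + 1) = 0 := fun a _ ha => by
    rw [mem_range] at ha; omega
  rw [← sum_subset (range_subset_range.2 hbn) vanish, ← sum_range_choose_eq_choose_succ]
  calc ∑ a ∈ range b, (b - (a + 1))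
      = ∑ a ∈ range b, (b - 1 - a) := sum_congr rfl fun a _ => by omega
    _ = ∑ a ∈ range b, a := sum_range_reflect id b
    _ = ∑ a ∈ range b, a.choose 1 := by simp only [Nat.choose_one_right]

theorem sum_range_sum_range_tsub_succ (n : ℕ) :
    ∑ a ∈ range n, ∑ b ∈ range n, (b - (a + 1)) = n.choose 3 := by
  rw [sum_comm, ← sum_range_choose_eq_choose_succ]
  exact sum_congr rfl fun b hb => sum_range_tsub_succ_eq_choose_two (mem_range.1 hb).le

theorem cast_choose_three_mul_six (n : ℕ) : (n.choose 3 : ℤ) * 6 = n * (n - 1) * (n - 2) := by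
  obtain _ | _ | _ | n := n
  · rfl
  · rfl
  · rfl
  have desc : (n + 3) * (n + 2) * (n + 1) = Nat.factorial 3 * (n + 3).choose 3 := by
    rw [← Nat.descFactorial_eq_factorial_mul_choose]
    simp only [Nat.descFactorial, Nat.reduceSubDiff, Nat.add_one_sub_one, tsub_zero, mul_one]
    ring
  have desc_int := congrArg (Nat.cast : ℕ → ℤ) desc
  push_cast [Nat.factorial] at desc_int ⊢
  linear_combination -desc_int

theorem card_filter_product_product {α β γ : Type*} (s : Finset α) (t : Finset β)
    (u : Finset γ) (p : α × β × γ → Prop) [DecidablePred p] :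
    #{x ∈ s ×ˢ t ×ˢ u | p x} = ∑ a ∈ s, ∑ b ∈ t, #{c ∈ u | p (a, b, c)} := by
  simp only [card_filter, sum_product]

theorem card_filter_range_le_add {a b C : ℕ} (hb : b ≤ a + C + 2) :
    #{c ∈ range (C + 1) | a ≤ b ∧ a + C + 2 ≤ b + c} = b - (a + 1) := by
  have interval :
      {c ∈ range (C + 1) | a ≤ b ∧ a + C + 2 ≤ b + c} = Ico (a + C + 2 - b) (C + 1) := by
    ext c
    simp only [mem_filter, mem_range, mem_Ico]
    omega
  rw [interval, Nat.card_Ico]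
  omega

theorem third_region_count_two_smaller_equal (A C : ℕ) (hAC : A ≤ C + 2) :
    ({(a, b, c) : ℕ × ℕ × ℕ |
        a ≤ b ∧ b ≤ A ∧ c ≤ C ∧ a + C + 2 ≤ b + c}.ncard : ℤ) =
      ((A : ℤ) + 1) * A * ((A : ℤ) - 1) / 6 := by
  have as_finset : {(a, b, c) : ℕ × ℕ × ℕ | a ≤ b ∧ b ≤ A ∧ c ≤ C ∧ a + C + 2 ≤ b + c} =
      ↑{x ∈ range (A + 1) ×ˢ range (A + 1) ×ˢ range (C + 1) |
        x.1 ≤ x.2.1 ∧ x.1 + C + 2 ≤ x.2.1 + x.2.2} := by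
    ext ⟨a, b, c⟩
    simp only [Set.mem_ofPred_eq, coe_filter, mem_product, mem_range]
    omega
  have count : #{x ∈ range (A + 1) ×ˢ range (A + 1) ×ˢ range (C + 1) |
      x.1 ≤ x.2.1 ∧ x.1 + C + 2 ≤ x.2.1 + x.2.2} = (A + 1).choose 3 := by
    rw [card_filter_product_product, ← sum_range_sum_range_tsub_succ]
    refine sum_congr rfl fun a _ => sum_congr rfl fun b hb => card_filter_range_le_add ?_
    rw [mem_range] at hb
    omega
  rw [as_finset, Set.ncard_coe_finset, count]
  refine Int.ediv_eq_of_eq_mul_left (by norm_num) ?_ |>.symm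
  rw [cast_choose_three_mul_six]
  push_cast
  ring
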